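/- arXiv:2205.12332 — 2 statements merged into one kernel-verified Lean document; each statement's English description precedes it below -/
import Mathlib

section
/- For the even-dimensional constant curvature curve with radii r_i and frequencies ω_i, normalized by arc length so that ‖x'‖ = 1 (i.e. Σ_i ω_i² r_i² = 1), the squared circumradius function ρ_θ²(Δ) = t_1² t_2 / (4 t_1 t_2 − 4 t_3²) satisfies lim_{Δ→0} ρ_θ²(Δ) = 1 / (Σ_i r_i² ω_i⁴) = 1/κ₁², where κ₁ is the first curvature of the curve. -/
open Real Finset Filter Topology

lemma aux_sin_sub (y : ℝ) : |Real.sin y - y| ≤ 2 * |y| ^ 3 := by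
  rcases le_or_gt (|y|) 1 with h | h
  · have hb := Real.sin_bound h
    have h3 : |y ^ 3 / 6| = |y| ^ 3 / 6 := by
      rw [abs_div, abs_pow]; norm_num
    have htri : |Real.sin y - y| ≤ |Real.sin y - (y - y ^ 3 / 6)| + |y ^ 3 / 6| := by
      have e : Real.sin y - y = (Real.sin y - (y - y ^ 3 / 6)) + -(y ^ 3 / 6) := by ring
      rw [e]
      exact (abs_add_le _ _).trans (by rw [abs_neg])
    have h4 : |y| ^ 4 ≤ |y| ^ 3 := by
      calc |y| ^ 4 = |y| ^ 3 * |y| := by ring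
        _ ≤ |y| ^ 3 * 1 := mul_le_mul_of_nonneg_left h (by positivity)
        _ = |y| ^ 3 := by ring
    nlinarith [abs_nonneg y, pow_nonneg (abs_nonneg y) 3]
  · have h1 : |Real.sin y - y| ≤ |Real.sin y| + |y| := by
      have e : Real.sin y - y = Real.sin y + -y := by ring
      rw [e]
      exact (abs_add_le _ _).trans (by rw [abs_neg])
    have h2 := Real.abs_sin_le_one y
    have h1y : 1 ≤ |y| := h.le
    have h3 : |y| ≤ |y| ^ 3 := by
      nlinarith [mul_nonneg (mul_nonneg (abs_nonneg y) (sub_nonneg.2 h1y)) (by positivity : (0:ℝ) ≤ |y| + 1)]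
    nlinarith [abs_nonneg y]

lemma aux_L1 (c : ℝ) : Tendsto (fun Δ : ℝ => Real.sin (c * Δ) / Δ) (𝓝[≠] (0:ℝ)) (𝓝 c) := by
  rw [← tendsto_sub_nhds_zero_iff]
  apply squeeze_zero_norm' (a := fun Δ : ℝ => 2 * |c| ^ 3 * Δ ^ 2)
  · filter_upwards [self_mem_nhdsWithin] with Δ hΔ
    have hΔ' : Δ ≠ 0 := hΔ
    have key := aux_sin_sub (c * Δ)
    have e : Real.sin (c * Δ) / Δ - c = (Real.sin (c * Δ) - c * Δ) / Δ := by
      field_simp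
    rw [Real.norm_eq_abs, e, abs_div]
    rw [div_le_iff₀ (by positivity : (0:ℝ) < |Δ|)]
    calc |Real.sin (c * Δ) - c * Δ| ≤ 2 * |c * Δ| ^ 3 := key
      _ = 2 * |c| ^ 3 * Δ ^ 2 * |Δ| := by
          rw [abs_mul, mul_pow, show |Δ| ^ 3 = |Δ| ^ 2 * |Δ| by ring, sq_abs]; ring
  · have hc : Continuous fun Δ : ℝ => 2 * |c| ^ 3 * Δ ^ 2 := by continuity
    have h := hc.tendsto 0
    simp only [ne_eq, OfNat.ofNat_ne_zero, not_false_eq_true, zero_pow, mul_zero] at h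
    norm_num at h
    exact h.mono_left nhdsWithin_le_nhds

lemma aux_L2 (c : ℝ) : Tendsto (fun Δ : ℝ => (Real.sin (c * Δ) - c * Δ) / Δ ^ 2) (𝓝[≠] (0:ℝ)) (𝓝 0) := by
  apply squeeze_zero_norm (a := fun Δ : ℝ => 2 * |c| ^ 3 * |Δ|)
  · intro Δ
    have key := aux_sin_sub (c * Δ)
    rw [Real.norm_eq_abs, abs_div]
    rcases eq_or_ne Δ 0 with rfl | hΔ
    · simp
    · rw [div_le_iff₀ (by positivity : (0:ℝ) < |Δ ^ 2|)]
      calc |Real.sin (c * Δ) - c * Δ| ≤ 2 * |c * Δ| ^ 3 := key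
        _ = 2 * |c| ^ 3 * |Δ| * |Δ ^ 2| := by
            rw [abs_mul, mul_pow, abs_pow, show |Δ| ^ 3 = |Δ| * |Δ| ^ 2 by ring]; ring
  · have h := (continuous_abs.tendsto (0:ℝ)).const_mul (2 * |c| ^ 3)
    simp only [abs_zero, mul_zero] at h
    exact h.mono_left nhdsWithin_le_nhds

theorem stmt11 (m : ℕ) (r ω : ℕ → ℝ)
    (hunit : ∑ i ∈ Finset.range m, ω i ^ 2 * r i ^ 2 = 1) :
    Filter.Tendsto (fun Δ : ℝ =>
        (2 * ∑ i ∈ Finset.range m, r i ^ 2 * (1 - Real.cos (ω i * Δ))) ^ 2 /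
          (4 * (2 * ∑ i ∈ Finset.range m, r i ^ 2 * (1 - Real.cos (ω i * Δ))) -
            4 * (∑ i ∈ Finset.range m, r i ^ 2 * ω i * Real.sin (ω i * Δ)) ^ 2))
      (𝓝[≠] (0 : ℝ)) (𝓝 (1 / ∑ i ∈ Finset.range m, r i ^ 2 * ω i ^ 4)) := by
  -- positivity of A
  have hApos : 0 < ∑ i ∈ Finset.range m, r i ^ 2 * ω i ^ 4 := by
    obtain ⟨i0, hi0, hne⟩ := Finset.exists_ne_zero_of_sum_ne_zero (s := Finset.range m)
      (f := fun i => ω i ^ 2 * r i ^ 2) (by rw [hunit]; norm_num)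
    have hp : 0 < ω i0 ^ 2 * r i0 ^ 2 := lt_of_le_of_ne (by positivity) (Ne.symm hne)
    have hω : ω i0 ≠ 0 := by intro h; rw [h] at hp; simp at hp
    have hr : r i0 ≠ 0 := by intro h; rw [h] at hp; simp at hp
    apply Finset.sum_pos' (fun i _ => by positivity)
    exact ⟨i0, hi0, by positivity⟩
  -- limit of the normalized numerator
  have hNlim : Tendsto (fun Δ : ℝ =>
      (∑ i ∈ Finset.range m, r i ^ 2 * (2 * (Real.sin (ω i / 2 * Δ) / Δ)) ^ 2) ^ 2)
      (𝓝[≠] (0:ℝ)) (𝓝 1) := by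
    have hsum : Tendsto (fun Δ : ℝ =>
        ∑ i ∈ Finset.range m, r i ^ 2 * (2 * (Real.sin (ω i / 2 * Δ) / Δ)) ^ 2)
        (𝓝[≠] (0:ℝ)) (𝓝 (∑ i ∈ Finset.range m, r i ^ 2 * (2 * (ω i / 2)) ^ 2)) := by
      apply tendsto_finset_sum
      intro i _
      exact Tendsto.const_mul _ ((Tendsto.const_mul 2 (aux_L1 (ω i / 2))).pow 2)
    have hone : (∑ i ∈ Finset.range m, r i ^ 2 * (2 * (ω i / 2)) ^ 2) = 1 := by
      rw [← hunit]; exact Finset.sum_congr rfl fun i _ => by ring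
    have := hsum.pow 2
    rwa [hone, one_pow] at this
  -- limit of the normalized denominator
  have hDlim : Tendsto (fun Δ : ℝ =>
      ∑ i ∈ Finset.range m, ∑ j ∈ Finset.range m,
        8 * r i ^ 2 * r j ^ 2 *
          ((-((ω i - ω j) / 2) * ((Real.sin ((ω i + ω j) / 2 * Δ) - (ω i + ω j) / 2 * Δ) / Δ ^ 2) +
              (ω i + ω j) / 2 * ((Real.sin ((ω i - ω j) / 2 * Δ) - (ω i - ω j) / 2 * Δ) / Δ ^ 2)) ^ 2 +
            (ω i ^ 2 + ω j ^ 2) * (Real.sin (ω i / 2 * Δ) / Δ) ^ 2 * (Real.sin (ω j / 2 * Δ) / Δ) ^ 2))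
      (𝓝[≠] (0:ℝ)) (𝓝 (∑ i ∈ Finset.range m, r i ^ 2 * ω i ^ 4)) := by
    have hD0 : Tendsto (fun Δ : ℝ =>
        ∑ i ∈ Finset.range m, ∑ j ∈ Finset.range m,
          8 * r i ^ 2 * r j ^ 2 *
            ((-((ω i - ω j) / 2) * ((Real.sin ((ω i + ω j) / 2 * Δ) - (ω i + ω j) / 2 * Δ) / Δ ^ 2) +
                (ω i + ω j) / 2 * ((Real.sin ((ω i - ω j) / 2 * Δ) - (ω i - ω j) / 2 * Δ) / Δ ^ 2)) ^ 2 +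
              (ω i ^ 2 + ω j ^ 2) * (Real.sin (ω i / 2 * Δ) / Δ) ^ 2 * (Real.sin (ω j / 2 * Δ) / Δ) ^ 2))
        (𝓝[≠] (0:ℝ)) (𝓝 (∑ i ∈ Finset.range m, ∑ j ∈ Finset.range m,
          8 * r i ^ 2 * r j ^ 2 *
            ((-((ω i - ω j) / 2) * 0 + (ω i + ω j) / 2 * 0) ^ 2 +
              (ω i ^ 2 + ω j ^ 2) * (ω i / 2) ^ 2 * (ω j / 2) ^ 2))) := by
      apply tendsto_finset_sum
      intro i _
      apply tendsto_finset_sum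
      intro j _
      exact Tendsto.const_mul _
        ((((Tendsto.const_mul _ (aux_L2 ((ω i + ω j) / 2))).add
            (Tendsto.const_mul _ (aux_L2 ((ω i - ω j) / 2)))).pow 2).add
          ((Tendsto.const_mul _ ((aux_L1 (ω i / 2)).pow 2)).mul ((aux_L1 (ω j / 2)).pow 2)))
    have hDA : (∑ i ∈ Finset.range m, ∑ j ∈ Finset.range m,
          8 * r i ^ 2 * r j ^ 2 *
            ((-((ω i - ω j) / 2) * 0 + (ω i + ω j) / 2 * 0) ^ 2 +
              (ω i ^ 2 + ω j ^ 2) * (ω i / 2) ^ 2 * (ω j / 2) ^ 2))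
        = ∑ i ∈ Finset.range m, r i ^ 2 * ω i ^ 4 := by
      calc (∑ i ∈ Finset.range m, ∑ j ∈ Finset.range m,
            8 * r i ^ 2 * r j ^ 2 *
              ((-((ω i - ω j) / 2) * 0 + (ω i + ω j) / 2 * 0) ^ 2 +
                (ω i ^ 2 + ω j ^ 2) * (ω i / 2) ^ 2 * (ω j / 2) ^ 2))
          = ∑ i ∈ Finset.range m, ∑ j ∈ Finset.range m,
              ((1 / 2 * (r i ^ 2 * ω i ^ 4)) * (ω j ^ 2 * r j ^ 2) +
                (ω i ^ 2 * r i ^ 2) * (1 / 2 * (r j ^ 2 * ω j ^ 4))) :=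
            Finset.sum_congr rfl fun i _ => Finset.sum_congr rfl fun j _ => by ring
        _ = (∑ i ∈ Finset.range m, 1 / 2 * (r i ^ 2 * ω i ^ 4)) *
              (∑ j ∈ Finset.range m, ω j ^ 2 * r j ^ 2) +
            (∑ i ∈ Finset.range m, ω i ^ 2 * r i ^ 2) *
              (∑ j ∈ Finset.range m, 1 / 2 * (r j ^ 2 * ω j ^ 4)) := by
            rw [Finset.sum_mul_sum, Finset.sum_mul_sum, ← Finset.sum_add_distrib]
            exact Finset.sum_congr rfl fun i _ => Finset.sum_add_distrib
        _ = ∑ i ∈ Finset.range m, r i ^ 2 * ω i ^ 4 := by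
            rw [hunit, ← Finset.mul_sum]; ring
    rwa [hDA] at hD0
  -- combine
  refine Tendsto.congr' ?_ (hNlim.div hDlim hApos.ne')
  filter_upwards [self_mem_nhdsWithin] with Δ hΔ
  have hΔ0 : Δ ≠ 0 := hΔ
  have hΔ4 : Δ ^ 4 ≠ 0 := pow_ne_zero _ hΔ0
  have hcos : ∀ i : ℕ, 1 - Real.cos (ω i * Δ) = 2 * Real.sin (ω i / 2 * Δ) ^ 2 := by
    intro i
    rw [show ω i * Δ = 2 * (ω i / 2 * Δ) by ring, Real.cos_two_mul']
    have := Real.sin_sq_add_cos_sq (ω i / 2 * Δ); linarith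
  have hsin : ∀ i : ℕ,
      Real.sin (ω i * Δ) = 2 * Real.sin (ω i / 2 * Δ) * Real.cos (ω i / 2 * Δ) := by
    intro i
    rw [show ω i * Δ = 2 * (ω i / 2 * Δ) by ring, Real.sin_two_mul]
  have e1 : (∑ i ∈ Finset.range m, r i ^ 2 * (2 * (Real.sin (ω i / 2 * Δ) / Δ)) ^ 2) ^ 2
      = (2 * ∑ i ∈ Finset.range m, r i ^ 2 * (1 - Real.cos (ω i * Δ))) ^ 2 / Δ ^ 4 := by
    have h1 : ∀ i : ℕ, r i ^ 2 * (2 * (Real.sin (ω i / 2 * Δ) / Δ)) ^ 2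
        = 2 * (r i ^ 2 * (1 - Real.cos (ω i * Δ))) / Δ ^ 2 := by
      intro i
      rw [hcos i]; ring
    calc (∑ i ∈ Finset.range m, r i ^ 2 * (2 * (Real.sin (ω i / 2 * Δ) / Δ)) ^ 2) ^ 2
        = (∑ i ∈ Finset.range m, 2 * (r i ^ 2 * (1 - Real.cos (ω i * Δ))) / Δ ^ 2) ^ 2 :=
          congrArg (· ^ 2) (Finset.sum_congr rfl fun i _ => h1 i)
      _ = ((∑ i ∈ Finset.range m, 2 * (r i ^ 2 * (1 - Real.cos (ω i * Δ)))) / Δ ^ 2) ^ 2 := by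
          rw [← Finset.sum_div]
      _ = ((2 * ∑ i ∈ Finset.range m, r i ^ 2 * (1 - Real.cos (ω i * Δ))) / Δ ^ 2) ^ 2 := by
          rw [← Finset.mul_sum]
      _ = (2 * ∑ i ∈ Finset.range m, r i ^ 2 * (1 - Real.cos (ω i * Δ))) ^ 2 / Δ ^ 4 := by
          rw [div_pow, ← pow_mul]
  have hBig : (∑ i ∈ Finset.range m, ∑ j ∈ Finset.range m,
        8 * r i ^ 2 * r j ^ 2 *
          ((ω j * Real.sin (ω i / 2 * Δ) * Real.cos (ω j / 2 * Δ) -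
              ω i * Real.sin (ω j / 2 * Δ) * Real.cos (ω i / 2 * Δ)) ^ 2 +
            (ω i ^ 2 + ω j ^ 2) * Real.sin (ω i / 2 * Δ) ^ 2 * Real.sin (ω j / 2 * Δ) ^ 2))
      = 4 * (2 * ∑ i ∈ Finset.range m, r i ^ 2 * (1 - Real.cos (ω i * Δ))) -
          4 * (∑ i ∈ Finset.range m, r i ^ 2 * ω i * Real.sin (ω i * Δ)) ^ 2 := by
    simp only [hcos, hsin]
    have hsq : (∑ i ∈ Finset.range m,
          r i ^ 2 * ω i * (2 * Real.sin (ω i / 2 * Δ) * Real.cos (ω i / 2 * Δ))) ^ 2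
        = ∑ i ∈ Finset.range m, ∑ j ∈ Finset.range m,
            (r i ^ 2 * ω i * (2 * Real.sin (ω i / 2 * Δ) * Real.cos (ω i / 2 * Δ))) *
              (r j ^ 2 * ω j * (2 * Real.sin (ω j / 2 * Δ) * Real.cos (ω j / 2 * Δ))) := by
      rw [sq, Finset.sum_mul_sum]
    have honeS : (∑ i ∈ Finset.range m, r i ^ 2 * (2 * Real.sin (ω i / 2 * Δ) ^ 2))
        = ∑ i ∈ Finset.range m, ∑ j ∈ Finset.range m,
            (r i ^ 2 * (2 * Real.sin (ω i / 2 * Δ) ^ 2)) * (ω j ^ 2 * r j ^ 2) := by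
      conv_lhs => rw [← mul_one (∑ i ∈ Finset.range m, r i ^ 2 * (2 * Real.sin (ω i / 2 * Δ) ^ 2)),
        ← hunit, Finset.sum_mul_sum]
    rw [hsq, honeS]
    have hL2 : (∑ i ∈ Finset.range m, ∑ j ∈ Finset.range m,
          2 * (8 * r i ^ 2 * r j ^ 2 *
            ((ω j * Real.sin (ω i / 2 * Δ) * Real.cos (ω j / 2 * Δ) -
                ω i * Real.sin (ω j / 2 * Δ) * Real.cos (ω i / 2 * Δ)) ^ 2 +
              (ω i ^ 2 + ω j ^ 2) * Real.sin (ω i / 2 * Δ) ^ 2 * Real.sin (ω j / 2 * Δ) ^ 2)))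
        = ∑ i ∈ Finset.range m, ∑ j ∈ Finset.range m,
            ((8 * ((r i ^ 2 * (2 * Real.sin (ω i / 2 * Δ) ^ 2)) * (ω j ^ 2 * r j ^ 2)) -
              4 * ((r i ^ 2 * ω i * (2 * Real.sin (ω i / 2 * Δ) * Real.cos (ω i / 2 * Δ))) *
                (r j ^ 2 * ω j * (2 * Real.sin (ω j / 2 * Δ) * Real.cos (ω j / 2 * Δ))))) +
             (8 * ((r j ^ 2 * (2 * Real.sin (ω j / 2 * Δ) ^ 2)) * (ω i ^ 2 * r i ^ 2)) -
              4 * ((r j ^ 2 * ω j * (2 * Real.sin (ω j / 2 * Δ) * Real.cos (ω j / 2 * Δ))) *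
                (r i ^ 2 * ω i * (2 * Real.sin (ω i / 2 * Δ) * Real.cos (ω i / 2 * Δ)))))) := by
      refine Finset.sum_congr rfl fun i _ => Finset.sum_congr rfl fun j _ => ?_
      linear_combination
        (16 * r i ^ 2 * r j ^ 2 * ω j ^ 2 * Real.sin (ω i / 2 * Δ) ^ 2) *
          (Real.sin_sq_add_cos_sq (ω j / 2 * Δ)) +
        (16 * r i ^ 2 * r j ^ 2 * ω i ^ 2 * Real.sin (ω j / 2 * Δ) ^ 2) *
          (Real.sin_sq_add_cos_sq (ω i / 2 * Δ))
    have hswap : (∑ i ∈ Finset.range m, ∑ j ∈ Finset.range m,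
          (8 * ((r j ^ 2 * (2 * Real.sin (ω j / 2 * Δ) ^ 2)) * (ω i ^ 2 * r i ^ 2)) -
            4 * ((r j ^ 2 * ω j * (2 * Real.sin (ω j / 2 * Δ) * Real.cos (ω j / 2 * Δ))) *
              (r i ^ 2 * ω i * (2 * Real.sin (ω i / 2 * Δ) * Real.cos (ω i / 2 * Δ))))))
        = ∑ i ∈ Finset.range m, ∑ j ∈ Finset.range m,
            (8 * ((r i ^ 2 * (2 * Real.sin (ω i / 2 * Δ) ^ 2)) * (ω j ^ 2 * r j ^ 2)) -
              4 * ((r i ^ 2 * ω i * (2 * Real.sin (ω i / 2 * Δ) * Real.cos (ω i / 2 * Δ))) *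
                (r j ^ 2 * ω j * (2 * Real.sin (ω j / 2 * Δ) * Real.cos (ω j / 2 * Δ))))) :=
      Finset.sum_comm
    simp only [Finset.sum_add_distrib, ← Finset.mul_sum, Finset.sum_sub_distrib] at hL2 hswap ⊢
    linarith [hL2, hswap]
  have e2 : (∑ i ∈ Finset.range m, ∑ j ∈ Finset.range m,
        8 * r i ^ 2 * r j ^ 2 *
          ((-((ω i - ω j) / 2) * ((Real.sin ((ω i + ω j) / 2 * Δ) - (ω i + ω j) / 2 * Δ) / Δ ^ 2) +
              (ω i + ω j) / 2 * ((Real.sin ((ω i - ω j) / 2 * Δ) - (ω i - ω j) / 2 * Δ) / Δ ^ 2)) ^ 2 +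
            (ω i ^ 2 + ω j ^ 2) * (Real.sin (ω i / 2 * Δ) / Δ) ^ 2 * (Real.sin (ω j / 2 * Δ) / Δ) ^ 2))
      = (4 * (2 * ∑ i ∈ Finset.range m, r i ^ 2 * (1 - Real.cos (ω i * Δ))) -
          4 * (∑ i ∈ Finset.range m, r i ^ 2 * ω i * Real.sin (ω i * Δ)) ^ 2) / Δ ^ 4 := by
    have h2 : ∀ i j : ℕ,
        8 * r i ^ 2 * r j ^ 2 *
          ((-((ω i - ω j) / 2) * ((Real.sin ((ω i + ω j) / 2 * Δ) - (ω i + ω j) / 2 * Δ) / Δ ^ 2) +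
              (ω i + ω j) / 2 * ((Real.sin ((ω i - ω j) / 2 * Δ) - (ω i - ω j) / 2 * Δ) / Δ ^ 2)) ^ 2 +
            (ω i ^ 2 + ω j ^ 2) * (Real.sin (ω i / 2 * Δ) / Δ) ^ 2 * (Real.sin (ω j / 2 * Δ) / Δ) ^ 2)
        = (8 * r i ^ 2 * r j ^ 2 *
            ((ω j * Real.sin (ω i / 2 * Δ) * Real.cos (ω j / 2 * Δ) -
                ω i * Real.sin (ω j / 2 * Δ) * Real.cos (ω i / 2 * Δ)) ^ 2 +
              (ω i ^ 2 + ω j ^ 2) * Real.sin (ω i / 2 * Δ) ^ 2 * Real.sin (ω j / 2 * Δ) ^ 2)) / Δ ^ 4 := by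
      intro i j
      have hsa : Real.sin ((ω i + ω j) / 2 * Δ)
          = Real.sin (ω i / 2 * Δ) * Real.cos (ω j / 2 * Δ) +
            Real.cos (ω i / 2 * Δ) * Real.sin (ω j / 2 * Δ) := by
        rw [show (ω i + ω j) / 2 * Δ = ω i / 2 * Δ + ω j / 2 * Δ by ring, Real.sin_add]
      have hsb : Real.sin ((ω i - ω j) / 2 * Δ)
          = Real.sin (ω i / 2 * Δ) * Real.cos (ω j / 2 * Δ) -
            Real.cos (ω i / 2 * Δ) * Real.sin (ω j / 2 * Δ) := by
        rw [show (ω i - ω j) / 2 * Δ = ω i / 2 * Δ - ω j / 2 * Δ by ring, Real.sin_sub]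
      rw [hsa, hsb]
      field_simp
      ring
    calc (∑ i ∈ Finset.range m, ∑ j ∈ Finset.range m,
          8 * r i ^ 2 * r j ^ 2 *
            ((-((ω i - ω j) / 2) * ((Real.sin ((ω i + ω j) / 2 * Δ) - (ω i + ω j) / 2 * Δ) / Δ ^ 2) +
                (ω i + ω j) / 2 * ((Real.sin ((ω i - ω j) / 2 * Δ) - (ω i - ω j) / 2 * Δ) / Δ ^ 2)) ^ 2 +
              (ω i ^ 2 + ω j ^ 2) * (Real.sin (ω i / 2 * Δ) / Δ) ^ 2 * (Real.sin (ω j / 2 * Δ) / Δ) ^ 2))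
        = ∑ i ∈ Finset.range m, ∑ j ∈ Finset.range m,
            (8 * r i ^ 2 * r j ^ 2 *
              ((ω j * Real.sin (ω i / 2 * Δ) * Real.cos (ω j / 2 * Δ) -
                  ω i * Real.sin (ω j / 2 * Δ) * Real.cos (ω i / 2 * Δ)) ^ 2 +
                (ω i ^ 2 + ω j ^ 2) * Real.sin (ω i / 2 * Δ) ^ 2 * Real.sin (ω j / 2 * Δ) ^ 2)) / Δ ^ 4 :=
          Finset.sum_congr rfl fun i _ => Finset.sum_congr rfl fun j _ => h2 i j
      _ = (∑ i ∈ Finset.range m, ∑ j ∈ Finset.range m,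
            8 * r i ^ 2 * r j ^ 2 *
              ((ω j * Real.sin (ω i / 2 * Δ) * Real.cos (ω j / 2 * Δ) -
                  ω i * Real.sin (ω j / 2 * Δ) * Real.cos (ω i / 2 * Δ)) ^ 2 +
                (ω i ^ 2 + ω j ^ 2) * Real.sin (ω i / 2 * Δ) ^ 2 * Real.sin (ω j / 2 * Δ) ^ 2)) / Δ ^ 4 := by
          simp only [← Finset.sum_div]
      _ = (4 * (2 * ∑ i ∈ Finset.range m, r i ^ 2 * (1 - Real.cos (ω i * Δ))) -
            4 * (∑ i ∈ Finset.range m, r i ^ 2 * ω i * Real.sin (ω i * Δ)) ^ 2) / Δ ^ 4 := by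
          rw [hBig]
  simp only [Pi.div_apply]
  rw [e1, e2, div_div_eq_mul_div, div_mul_cancel₀ _ hΔ4]
end

section
/- Let y_1 = r cos(ωα) + w_1 and y_2 = r sin(ωα) + w_2 where w_1, w_2 are independent N(0, σ²). Then in polar coordinates η = atan2(y_2, y_1), β = √(y_1² + y_2²), the marginal density of η is proportional to exp(q²)·[exp(−q²) + √π q (1 + erf(q))] where q = (r/√(2σ²)) cos(η − ωα); equivalently, p(η | α) ∝ 1 + √π q e^{q²} erfc(−q). -/
/-!
With `a = ωα`, completing the square in the polar coordinates gives
`(β cos η - r cos a)² + (β sin η - r sin a)² = (β - r cos (η - a))² + r² sin² (η - a)`.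
With `s = √(2σ²)` and `q = (r / s) cos (η - a)`, the substitution `β = s x` reduces the radial
integral to the moment `∫₀^∞ x e^{-(x - q)²} dx = e^{-q²}/2 + q (√π/2 + ∫₀^q e^{-u²} du)`, whose
antiderivative is `-e^{-(x - q)²}/2 + q ∫₀^{x - q} e^{-u²} du`. The remaining Gaussian factor
`e^{-(r/s)² sin² (η - a)} = e^{-(r/s)²} e^{q²}` leaves the constant `e^{-(r/s)²} / (2π)`.
-/

open Real MeasureTheory Filter Set Topology

lemma integral_exp_neg_sq_neg (t : ℝ) :
    ∫ u in (0 : ℝ)..-t, exp (-u ^ 2) = -∫ u in (0 : ℝ)..t, exp (-u ^ 2) := by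
  rw [intervalIntegral.integral_symm, ← neg_zero, ← intervalIntegral.integral_comp_neg]
  simp

lemma tendsto_integral_exp_neg_sq_atTop :
    Tendsto (fun t => ∫ u in (0 : ℝ)..t, exp (-u ^ 2)) atTop (𝓝 (√π / 2)) := by
  have h := intervalIntegral_tendsto_integral_Ioi 0
    ((integrable_exp_neg_mul_sq one_pos).integrableOn) tendsto_id
  have hval : ∫ x in Ioi (0 : ℝ), exp (-x ^ 2) = √π / 2 := by
    simpa using integral_gaussian_Ioi 1
  simp only [neg_one_mul, id] at h
  rwa [hval] at h

lemma integrable_mul_exp_neg_sq_sub (m : ℝ) :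
    Integrable (fun x => x * exp (-(x - m) ^ 2)) := by
  have h₁ := (integrable_mul_exp_neg_mul_sq one_pos).comp_sub_right m
  have h₂ := ((integrable_exp_neg_mul_sq one_pos).comp_sub_right m).const_mul m
  refine (h₁.add h₂).congr (Eventually.of_forall fun x => ?_)
  simp only [Pi.add_apply, neg_one_mul]; ring

lemma hasDerivAt_antideriv_mul_exp_neg_sq_sub (m x : ℝ) :
    HasDerivAt (fun x => -exp (-(x - m) ^ 2) / 2 + m * ∫ u in (0 : ℝ)..x - m, exp (-u ^ 2))
      (x * exp (-(x - m) ^ 2)) x := by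
  have hcont : Continuous fun u : ℝ => exp (-u ^ 2) := by fun_prop
  have hprim :
      HasDerivAt (fun t => ∫ u in (0 : ℝ)..t, exp (-u ^ 2)) (exp (-(x - m) ^ 2)) (x - m) :=
    intervalIntegral.integral_hasDerivAt_right (hcont.intervalIntegrable _ _)
      hcont.stronglyMeasurable.stronglyMeasurableAtFilter hcont.continuousAt
  have hsq : HasDerivAt (fun x => -(x - m) ^ 2) (-(2 * (x - m))) x := by
    simpa using (((hasDerivAt_id x).sub_const m).fun_pow 2).fun_neg
  refine ((hsq.exp.fun_neg.div_const 2).fun_add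
    ((hprim.comp x ((hasDerivAt_id' x).sub_const m)).const_mul m)).congr_deriv ?_
  ring

lemma tendsto_sub_const_atTop (m : ℝ) : Tendsto (fun x : ℝ => x - m) atTop atTop :=
  tendsto_atTop_add_const_right _ (-m) tendsto_id

lemma tendsto_exp_neg_sq_sub_atTop (m : ℝ) :
    Tendsto (fun x => exp (-(x - m) ^ 2)) atTop (𝓝 0) := by
  have h : Tendsto (fun x : ℝ => (x - m) ^ 2) atTop atTop :=
    (tendsto_pow_atTop two_ne_zero).comp (tendsto_sub_const_atTop m)
  exact tendsto_exp_atBot.comp (tendsto_neg_atTop_atBot.comp h)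

lemma integral_Ioi_mul_exp_neg_sq_sub (m : ℝ) :
    ∫ x in Ioi (0 : ℝ), x * exp (-(x - m) ^ 2) =
      exp (-m ^ 2) / 2 + m * (√π / 2 + ∫ u in (0 : ℝ)..m, exp (-u ^ 2)) := by
  have hlim : Tendsto
      (fun x => -exp (-(x - m) ^ 2) / 2 + m * ∫ u in (0 : ℝ)..x - m, exp (-u ^ 2))
      atTop (𝓝 (m * (√π / 2))) := by
    simpa using ((tendsto_exp_neg_sq_sub_atTop m).neg.div_const 2).add
      ((tendsto_integral_exp_neg_sq_atTop.comp (tendsto_sub_const_atTop m)).const_mul m)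
  rw [integral_Ioi_of_hasDerivAt_of_tendsto'
    (fun x _ => hasDerivAt_antideriv_mul_exp_neg_sq_sub m x)
    (integrable_mul_exp_neg_sq_sub m).integrableOn hlim, zero_sub, integral_exp_neg_sq_neg, neg_sq]
  ring

lemma integral_Ioi_mul_exp_neg_sq_div_sub {c : ℝ} (hc : 0 < c) (q : ℝ) :
    ∫ x in Ioi (0 : ℝ), x * exp (-(x / c - q) ^ 2) =
      c ^ 2 * (exp (-q ^ 2) / 2 + q * (√π / 2 + ∫ u in (0 : ℝ)..q, exp (-u ^ 2))) := by
  have hscale : ∀ x : ℝ,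
      x * exp (-(x / c - q) ^ 2) = c * (c⁻¹ * x * exp (-(c⁻¹ * x - q) ^ 2)) := by
    intro x
    rw [inv_mul_eq_div, ← mul_assoc, mul_div_cancel₀ _ hc.ne']
  simp_rw [hscale]
  rw [integral_const_mul,
    integral_comp_mul_left_Ioi (fun t => t * exp (-(t - q) ^ 2)) 0 (inv_pos.2 hc), mul_zero,
    smul_eq_mul, inv_inv, integral_Ioi_mul_exp_neg_sq_sub]
  ring

lemma sq_sub_add_sq_sub_eq (β r η a : ℝ) :
    (β * cos η - r * cos a) ^ 2 + (β * sin η - r * sin a) ^ 2 =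
      (β - r * cos (η - a)) ^ 2 + r ^ 2 * sin (η - a) ^ 2 := by
  rw [cos_sub, sin_sub]
  linear_combination (β ^ 2 - r ^ 2 * (sin a ^ 2 + cos a ^ 2)) * sin_sq_add_cos_sq η

theorem stmt14_general (r ω α σ : ℝ) (hσ : 0 < σ) (erf : ℝ → ℝ)
    (herf : ∀ t : ℝ, erf t = 2 / Real.sqrt Real.pi * ∫ u in (0 : ℝ)..t, Real.exp (-u ^ 2)) :
    ∃ c : ℝ, 0 < c ∧ ∀ η : ℝ,
      (∫ β in Set.Ioi (0 : ℝ), β * (1 / (2 * Real.pi * σ ^ 2) *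
        Real.exp (-((β * Real.cos η - r * Real.cos (ω * α)) ^ 2 +
            (β * Real.sin η - r * Real.sin (ω * α)) ^ 2) / (2 * σ ^ 2)))) =
      c * (1 + Real.sqrt Real.pi * (r / Real.sqrt (2 * σ ^ 2) * Real.cos (η - ω * α)) *
        Real.exp ((r / Real.sqrt (2 * σ ^ 2) * Real.cos (η - ω * α)) ^ 2) *
        (1 + erf (r / Real.sqrt (2 * σ ^ 2) * Real.cos (η - ω * α)))) := by
  set s := √(2 * σ ^ 2)
  have hs : 0 < s := by positivity
  have hs2 : s ^ 2 = 2 * σ ^ 2 := sq_sqrt (by positivity)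
  refine ⟨exp (-(r / s) ^ 2) / (2 * π), by positivity, fun η => ?_⟩
  set q := r / s * cos (η - ω * α)
  have hintegrand : ∀ β : ℝ, β * (1 / (2 * π * σ ^ 2) *
      exp (-((β * cos η - r * cos (ω * α)) ^ 2 + (β * sin η - r * sin (ω * α)) ^ 2) /
        (2 * σ ^ 2))) =
        exp (q ^ 2 - (r / s) ^ 2) / (2 * π * σ ^ 2) * (β * exp (-(β / s - q) ^ 2)) := by
    intro β
    have hexponent :
        -((β * cos η - r * cos (ω * α)) ^ 2 + (β * sin η - r * sin (ω * α)) ^ 2) / (2 * σ ^ 2) =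
          (q ^ 2 - (r / s) ^ 2) + -(β / s - q) ^ 2 := by
      rw [sq_sub_add_sq_sub_eq, sin_sq, ← hs2]
      simp only [q]
      field_simp
      ring
    rw [hexponent, exp_add]
    ring
  simp_rw [hintegrand]
  rw [integral_const_mul, integral_Ioi_mul_exp_neg_sq_div_sub hs, herf, hs2, exp_sub,
    exp_neg (q ^ 2), exp_neg ((r / s) ^ 2)]
  field_simp

theorem stmt14 (r ω α σ : ℝ) (hr : 0 < r) (hσ : 0 < σ) (erf : ℝ → ℝ)
    (herf : ∀ t : ℝ, erf t = 2 / Real.sqrt Real.pi * ∫ u in (0 : ℝ)..t, Real.exp (-u ^ 2)) :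
    ∃ c : ℝ, 0 < c ∧ ∀ η : ℝ,
      (∫ β in Set.Ioi (0 : ℝ), β * (1 / (2 * Real.pi * σ ^ 2) *
        Real.exp (-((β * Real.cos η - r * Real.cos (ω * α)) ^ 2 +
            (β * Real.sin η - r * Real.sin (ω * α)) ^ 2) / (2 * σ ^ 2)))) =
      c * (1 + Real.sqrt Real.pi * (r / Real.sqrt (2 * σ ^ 2) * Real.cos (η - ω * α)) *
        Real.exp ((r / Real.sqrt (2 * σ ^ 2) * Real.cos (η - ω * α)) ^ 2) *
        (1 + erf (r / Real.sqrt (2 * σ ^ 2) * Real.cos (η - ω * α)))) :=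
  stmt14_general r ω α σ hσ erf herf
end
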